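/- arXiv:2107.04653 — 2 statements merged into one kernel-verified Lean document; each statement's English description precedes it below -/
import Mathlib

section
/- With the notation of the frame connection: let $E$ be a right $B$-module with a $B$-valued inner product and standard frame $s_1,\dots,s_d$ satisfying the reproducing formula, and suppose additionally the inner product is conjugate-symmetric ($\langle x,y\rangle_B^* = \langle y,x\rangle_B$) and $\delta$ is a $*$-derivation. Then the frame connection $\nabla_\delta(x) = \sum_k s_k\cdot\delta(\langle s_k,x\rangle_B)$ is metric compatible: $\delta(\langle x,y\rangle_B) = \langle\nabla_\delta(x), y\rangle_B + \langle x, \nabla_\delta(y)\rangle_B$ for all $x,y \in E$. -/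
open Finset in
/-- Metric compatibility of the frame connection: with a conjugate-symmetric,
right-`B`-linear (in the second variable), conjugate-`B`-linear (in the first variable)
`B`-valued inner product, a frame satisfying the reproducing formula, and a
`*`-derivation `δ`, the connection `∇_δ(x) = Σ_k s_k · δ⟨s_k, x⟩` satisfies
`δ⟨x,y⟩ = ⟨∇_δ x, y⟩ + ⟨x, ∇_δ y⟩`. -/
theorem frame_connection_metric (B : Type*) [Ring B] [StarRing B]
    (E : Type*) [AddCommGroup E]
    (sm : E → B → E) (ip : E → E → B)
    (hsm_addE : ∀ (x y : E) (b : B), sm (x + y) b = sm x b + sm y b)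
    (hsm_addB : ∀ (x : E) (a b : B), sm x (a + b) = sm x a + sm x b)
    (hsm_mul : ∀ (x : E) (a b : B), sm (sm x a) b = sm x (a * b))
    (hip_addr : ∀ x y z : E, ip x (y + z) = ip x y + ip x z)
    (hip_right : ∀ (x y : E) (b : B), ip x (sm y b) = ip x y * b)
    (hip_left : ∀ (x y : E) (b : B), ip (sm x b) y = star b * ip x y)
    (hip_sym : ∀ x y : E, star (ip x y) = ip y x)
    (δ : B → B)
    (hδ_add : ∀ a b : B, δ (a + b) = δ a + δ b)
    (hδ_mul : ∀ a b : B, δ (a * b) = δ a * b + a * δ b)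
    (hδ_star : ∀ b : B, δ (star b) = star (δ b))
    (d : ℕ) (s : Fin d → E)
    (hframe : ∀ x : E, ∑ k, sm (s k) (ip (s k) x) = x) :
    ∀ x y : E,
      δ (ip x y)
        = ip (∑ k, sm (s k) (δ (ip (s k) x))) y
          + ip x (∑ k, sm (s k) (δ (ip (s k) y))) := by
  intro x y
  have hsum : ∀ (z : E) (g : Fin d → E), ip z (∑ k, g k) = ∑ k, ip z (g k) := by
    intro z g
    exact map_sum (AddMonoidHom.mk' (ip z) (hip_addr z)) g univ
  have hδsum : ∀ (g : Fin d → B), δ (∑ k, g k) = ∑ k, δ (g k) := by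
    intro g
    exact map_sum (AddMonoidHom.mk' δ hδ_add) g univ
  have h1 : δ (ip x y) = ∑ k, (δ (ip x (s k)) * ip (s k) y + ip x (s k) * δ (ip (s k) y)) := by
    conv_lhs => rw [← hframe y, hsum]
    rw [hδsum]
    refine Finset.sum_congr rfl fun k _ => ?_
    rw [hip_right, hδ_mul]
  have hterm1 : ip (∑ k, sm (s k) (δ (ip (s k) x))) y
      = ∑ k, δ (ip x (s k)) * ip (s k) y := by
    rw [← hip_sym y, hsum]
    rw [star_sum]
    refine Finset.sum_congr rfl fun k _ => ?_
    rw [hip_right, star_mul, ← hδ_star, hip_sym, hip_sym]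
  have hterm2 : ip x (∑ k, sm (s k) (δ (ip (s k) y)))
      = ∑ k, ip x (s k) * δ (ip (s k) y) := by
    rw [hsum]
    refine Finset.sum_congr rfl fun k _ => ?_
    rw [hip_right]
  rw [h1, hterm1, hterm2, Finset.sum_add_distrib]
end

section
/- Let $E$ be a right $B$-module with $B$-valued inner product and a frame $s_1,\dots,s_d$ satisfying the reproducing formula, and let $\nabla_\delta(x) = \sum_k s_k\cdot\delta(\langle s_k,x\rangle_B)$ for derivations $\delta$ of $B$. Then the curvature $R(\delta_1,\delta_2,x) := \nabla_{\delta_1}(\nabla_{\delta_2}(x)) - \nabla_{\delta_2}(\nabla_{\delta_1}(x)) - \nabla_{[\delta_1,\delta_2]}(x)$ equals $\sum_{k,l=1}^d s_k\cdot\big(\delta_1(\langle s_k,s_l\rangle_B)\,\delta_2(\langle s_l,x\rangle_B) - \delta_2(\langle s_k,s_l\rangle_B)\,\delta_1(\langle s_l,x\rangle_B)\big)$. -/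
open Finset in
/-- Curvature formula for the frame connection
`∇_δ(x) = Σ_k s_k · δ⟨s_k, x⟩`: the curvature
`R(δ₁,δ₂,x) = ∇_{δ₁}(∇_{δ₂} x) - ∇_{δ₂}(∇_{δ₁} x) - ∇_{[δ₁,δ₂]} x` equals
`Σ_{k,l} s_k · (δ₁⟨s_k,s_l⟩ δ₂⟨s_l,x⟩ - δ₂⟨s_k,s_l⟩ δ₁⟨s_l,x⟩)`. -/
theorem frame_connection_curvature (B : Type*) [Ring B] (E : Type*) [AddCommGroup E]
    (sm : E → B → E) (ip : E → E → B)
    (hsm_addE : ∀ (x y : E) (b : B), sm (x + y) b = sm x b + sm y b)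
    (hsm_addB : ∀ (x : E) (a b : B), sm x (a + b) = sm x a + sm x b)
    (hsm_mul : ∀ (x : E) (a b : B), sm (sm x a) b = sm x (a * b))
    (hip_addr : ∀ x y z : E, ip x (y + z) = ip x y + ip x z)
    (hip_right : ∀ (x y : E) (b : B), ip x (sm y b) = ip x y * b)
    (δ₁ δ₂ : B → B)
    (hδ₁_add : ∀ a b : B, δ₁ (a + b) = δ₁ a + δ₁ b)
    (hδ₁_mul : ∀ a b : B, δ₁ (a * b) = δ₁ a * b + a * δ₁ b)
    (hδ₂_add : ∀ a b : B, δ₂ (a + b) = δ₂ a + δ₂ b)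
    (hδ₂_mul : ∀ a b : B, δ₂ (a * b) = δ₂ a * b + a * δ₂ b)
    (d : ℕ) (s : Fin d → E)
    (hframe : ∀ x : E, ∑ k, sm (s k) (ip (s k) x) = x) :
    ∀ x : E,
      (∑ k, sm (s k) (δ₁ (ip (s k) (∑ l, sm (s l) (δ₂ (ip (s l) x))))))
        - (∑ k, sm (s k) (δ₂ (ip (s k) (∑ l, sm (s l) (δ₁ (ip (s l) x))))))
        - (∑ k, sm (s k) (δ₁ (δ₂ (ip (s k) x)) - δ₂ (δ₁ (ip (s k) x))))
      = ∑ k, ∑ l, sm (s k)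
          (δ₁ (ip (s k) (s l)) * δ₂ (ip (s l) x)
            - δ₂ (ip (s k) (s l)) * δ₁ (ip (s l) x)) := by
  intro x
  have hsmB_sum : ∀ (y : E) (f : Fin d → B), sm y (∑ l, f l) = ∑ l, sm y (f l) := fun y f =>
    map_sum (AddMonoidHom.mk' (sm y) (hsm_addB y)) f univ
  have hsmE_sum : ∀ (b : B) (g : Fin d → E), sm (∑ l, g l) b = ∑ l, sm (g l) b := fun b g =>
    map_sum (AddMonoidHom.mk' (fun y => sm y b) (fun u v => hsm_addE u v b)) g univ
  have hip_sum : ∀ (y : E) (g : Fin d → E), ip y (∑ l, g l) = ∑ l, ip y (g l) := fun y g =>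
    map_sum (AddMonoidHom.mk' (ip y) (hip_addr y)) g univ
  have hδ₁_sum : ∀ (f : Fin d → B), δ₁ (∑ l, f l) = ∑ l, δ₁ (f l) := fun f =>
    map_sum (AddMonoidHom.mk' δ₁ hδ₁_add) f univ
  have hδ₂_sum : ∀ (f : Fin d → B), δ₂ (∑ l, f l) = ∑ l, δ₂ (f l) := fun f =>
    map_sum (AddMonoidHom.mk' δ₂ hδ₂_add) f univ
  have hsm_sub : ∀ (y : E) (a b : B), sm y (a - b) = sm y a - sm y b := fun y a b =>
    map_sub (AddMonoidHom.mk' (sm y) (hsm_addB y)) a b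
  have key : ∀ (δ : B → B), (∀ f : Fin d → B, δ (∑ l, f l) = ∑ l, δ (f l)) →
      (∀ a b, δ (a * b) = δ a * b + a * δ b) → ∀ (c : Fin d → B) (k : Fin d),
      sm (s k) (δ (ip (s k) (∑ l, sm (s l) (c l))))
        = (∑ l, sm (s k) (δ (ip (s k) (s l)) * c l))
          + ∑ l, sm (s k) (ip (s k) (s l) * δ (c l)) := by
    intro δ hδsum hδmul c k
    rw [hip_sum]
    simp_rw [hip_right]
    rw [hδsum]
    simp_rw [hδmul]
    rw [hsmB_sum]
    simp_rw [hsm_addB]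
    rw [sum_add_distrib]
  have key2 : ∀ (g : Fin d → B),
      (∑ k, ∑ l, sm (s k) (ip (s k) (s l) * g l)) = ∑ l, sm (s l) (g l) := by
    intro g
    rw [Finset.sum_comm]
    refine Finset.sum_congr rfl fun l _ => ?_
    calc ∑ k, sm (s k) (ip (s k) (s l) * g l)
        = ∑ k, sm (sm (s k) (ip (s k) (s l))) (g l) := by simp_rw [hsm_mul]
      _ = sm (∑ k, sm (s k) (ip (s k) (s l))) (g l) := (hsmE_sum _ _).symm
      _ = sm (s l) (g l) := by rw [hframe (s l)]
  have e1 : (∑ k, sm (s k) (δ₁ (ip (s k) (∑ l, sm (s l) (δ₂ (ip (s l) x))))))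
      = (∑ k, ∑ l, sm (s k) (δ₁ (ip (s k) (s l)) * δ₂ (ip (s l) x)))
        + ∑ l, sm (s l) (δ₁ (δ₂ (ip (s l) x))) := by
    rw [sum_congr rfl fun k _ => key δ₁ hδ₁_sum hδ₁_mul (fun l => δ₂ (ip (s l) x)) k,
      sum_add_distrib, key2]
  have e2 : (∑ k, sm (s k) (δ₂ (ip (s k) (∑ l, sm (s l) (δ₁ (ip (s l) x))))))
      = (∑ k, ∑ l, sm (s k) (δ₂ (ip (s k) (s l)) * δ₁ (ip (s l) x)))
        + ∑ l, sm (s l) (δ₂ (δ₁ (ip (s l) x))) := by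
    rw [sum_congr rfl fun k _ => key δ₂ hδ₂_sum hδ₂_mul (fun l => δ₁ (ip (s l) x)) k,
      sum_add_distrib, key2]
  rw [e1, e2]
  simp_rw [hsm_sub, sum_sub_distrib]
  abel
end
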